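/- For every d ≥ 2, the graph G_d has no clique cutset, i.e., there is no clique K ⊆ V(G_d) such that G_d − K is disconnected. -/

import Mathlib

/-!
A clique meets the path `P_d` in at most two consecutive vertices, so each surviving path
vertex is joined inside `P_d - K` to an end of the path. If `K` avoids `P_d`, the whole path
survives and each center `v_m` has a neighbour of length `m` on it. Otherwise every center in
`K` is adjacent to a vertex of `K ∩ P_d`, so it is `v_{l(p)}` for an element `p`: `K` holds at
most one center. The surviving centers then form a nonempty clique, and near each end of the
path (`[1], s, [1,1]` and `[4], s, [3,4]`) there is a surviving element whose center survives.
-/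

open SimpleGraph

/-- Sorted list of the tuple set `S^d`: tuples with entries in {1,3} except
the last entry which is in {1,2,3,4}, of length between 1 and `d`,
listed in lexicographic order. -/
def Tl : ℕ → List (List ℕ)
  | 0 => []
  | k+1 => [[1]] ++ (Tl k).map (fun a => 1 :: a) ++ [[2], [3]]
            ++ (Tl k).map (fun a => 3 :: a) ++ [[4]]

/-- Strict lexicographic order on tuples (a proper prefix is smaller). -/
def lexLt (a b : List ℕ) : Prop := List.Lex (· < ·) a b

def lexLe (a b : List ℕ) : Prop := a = b ∨ lexLt a b

/-- `v` is the successor of `u` in the lexicographic order on `S^d`. -/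
def IsSucc (d : ℕ) (u v : List ℕ) : Prop :=
  v ∈ Tl d ∧ lexLt u v ∧ ∀ w ∈ Tl d, lexLt u w → lexLe v w

/-- The interval `[a,b]` in `S^d`. -/
def interval (d : ℕ) (a b : List ℕ) : Set (List ℕ) :=
  {c | c ∈ Tl d ∧ lexLe a c ∧ lexLe c b}

/-- `[a,b]` is a proper interval: no interior element has length `l(a)` or `l(b)`. -/
def ProperInterval (d : ℕ) (a b : List ℕ) : Prop :=
  a ∈ Tl d ∧ b ∈ Tl d ∧ lexLe a b ∧
  ∀ c ∈ interval d a b, c ≠ a → c ≠ b →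
    c.length ≠ a.length ∧ c.length ≠ b.length

/-- The set of left endpoints of flat steps of the interval `[a,b]`. -/
def flatSteps (d : ℕ) (a b : List ℕ) : Set (List ℕ) :=
  {c | c ∈ Tl d ∧ lexLe a c ∧ lexLt c b ∧ ∃ v, IsSucc d c v ∧ v.length = c.length}

/-- Vertices of `G_d`: elements of `S^d`, subdivision vertices, and centers. -/
inductive Vtx where
  | elt : List ℕ → Vtx
  | sub : ℕ → Fin 2 → Vtx
  | ctr : ℕ → Vtx
deriving DecidableEq

/-- The path `P_d` as a list of vertices: the elements of `S^d` in order,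
with two subdivision vertices between consecutive elements of equal length
and one otherwise. -/
def pathList (d : ℕ) : List Vtx :=
  ((Tl d).zipIdx.map Prod.swap).flatMap (fun p =>
    Vtx.elt p.2 :: (match (Tl d)[p.1 + 1]? with
      | none => []
      | some b =>
        if p.2.length = b.length then [Vtx.sub p.1 0, Vtx.sub p.1 1]
        else [Vtx.sub p.1 0]))

/-- `x` and `y` are consecutive in the list `l`. -/
def ChainAdj {α : Type} (l : List α) (x y : α) : Prop :=
  ∃ i, (l[i]? = some x ∧ l[i+1]? = some y) ∨
       (l[i]? = some y ∧ l[i+1]? = some x)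

/-- Adjacency from a center vertex. -/
def ctrAdj (d : ℕ) : Vtx → Vtx → Prop
  | Vtx.ctr k, Vtx.ctr m => k ≠ m ∧ 1 ≤ k ∧ k ≤ d ∧ 1 ≤ m ∧ m ≤ d
  | Vtx.ctr k, Vtx.elt a => 1 ≤ k ∧ k ≤ d ∧ a ∈ Tl d ∧ a.length = k
  | _, _ => False

/-- The vertex set of `G_d`. -/
def VSet (d : ℕ) : Finset Vtx :=
  (pathList d).toFinset ∪ (Finset.Icc 1 d).image Vtx.ctr

def GdAdj (d : ℕ) (x y : Vtx) : Prop :=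
  x ≠ y ∧ (ChainAdj (pathList d) x y ∨ ctrAdj d x y ∨ ctrAdj d y x)

/-- The graph `G_d`. -/
def Gd (d : ℕ) : SimpleGraph {x // x ∈ VSet d} where
  Adj x y := GdAdj d x.1 y.1
  symm := by
    constructor
    rintro x y ⟨hne, h⟩
    refine ⟨hne.symm, ?_⟩
    rcases h with ⟨i, hi⟩ | h | h
    · exact Or.inl ⟨i, hi.symm⟩
    · exact Or.inr (Or.inr h)
    · exact Or.inr (Or.inl h)
  loopless := ⟨fun x h => h.1 rfl⟩

/-- A rank decomposition of a graph `G`: a finite cubic tree together with a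
bijection from the vertices of `G` to the leaves of the tree. -/
structure RankDecomp {V : Type} [Fintype V] (G : SimpleGraph V) where
  t : Type
  fin : Fintype t
  tree : SimpleGraph t
  conn : tree.Connected
  acyc : tree.IsAcyclic
  two_le : 2 ≤ Nat.card t
  cubic : ∀ v : t, (tree.neighborSet v).ncard = 1 ∨ (tree.neighborSet v).ncard = 3
  leafEquiv : V ≃ {v : t // (tree.neighborSet v).ncard = 1}

/-- The set of vertices of `G` whose leaf lies on the side of `a` of
the edge `ab` of the decomposition tree. -/
def RankDecomp.side {V : Type} [Fintype V] {G : SimpleGraph V}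
    (D : RankDecomp G) (a b : D.t) : Set V :=
  {x | (D.tree.deleteEdges {s(a, b)}).Reachable (D.leafEquiv x).1 a}

/-- The cutrank function of `G`: the GF(2)-rank of the adjacency submatrix
between `X` and its complement. -/
noncomputable def cutRank {V : Type} [Fintype V] (G : SimpleGraph V) (X : Set V) : ℕ :=
  haveI : Fintype ↥X := Fintype.ofFinite _
  haveI : Fintype ↥(Xᶜ) := Fintype.ofFinite _
  haveI : DecidableRel G.Adj := Classical.decRel _
  Matrix.rank (Matrix.of (fun (x : ↥X) (y : ↥(Xᶜ)) =>
    if G.Adj x.1 y.1 then (1 : ZMod 2) else 0))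

/-- The decomposition `D` has width at most `k`. -/
def RankDecomp.WidthLE {V : Type} [Fintype V] {G : SimpleGraph V}
    (D : RankDecomp G) (k : ℕ) : Prop :=
  ∀ a b : D.t, D.tree.Adj a b → cutRank G (D.side a b) ≤ k

/-- The rank-width of `G`. -/
noncomputable def rankwidth {V : Type} [Fintype V] (G : SimpleGraph V) : ℕ :=
  sInf {k | ∃ D : RankDecomp G, D.WidthLE k}

/-- `l` is an induced path in `G`: its vertices are distinct and two of them
are adjacent in `G` iff they are consecutive on `l`. -/
def IsInducedPathList {V : Type} (G : SimpleGraph V) (l : List V) : Prop :=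
  l.Nodup ∧ ∀ x ∈ l, ∀ y ∈ l, (G.Adj x y ↔ ChainAdj l x y)

/-- The diamond: the complete graph on four vertices minus an edge. -/
def diamond : SimpleGraph (Fin 4) := (⊤ : SimpleGraph (Fin 4)).deleteEdges {s(2, 3)}

namespace SimpleGraph

variable {V : Type*} {G : SimpleGraph V} {s : Set V} {x y z : V}

def ReachableIn (G : SimpleGraph V) (s : Set V) (x y : V) : Prop :=
  ∃ (hx : x ∈ s) (hy : y ∈ s), (G.induce s).Reachable ⟨x, hx⟩ ⟨y, hy⟩

namespace ReachableIn

lemma refl (hx : x ∈ s) : G.ReachableIn s x x := ⟨hx, hx, .rfl⟩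

lemma symm (h : G.ReachableIn s x y) : G.ReachableIn s y x :=
  let ⟨hx, hy, h⟩ := h; ⟨hy, hx, h.symm⟩

lemma trans (h₁ : G.ReachableIn s x y) (h₂ : G.ReachableIn s y z) : G.ReachableIn s x z :=
  let ⟨hx, _, h₁⟩ := h₁; let ⟨_, hz, h₂⟩ := h₂; ⟨hx, hz, h₁.trans h₂⟩

lemma of_adj (hx : x ∈ s) (hy : y ∈ s) (h : G.Adj x y) : G.ReachableIn s x y :=
  ⟨hx, hy, (show (G.induce s).Adj ⟨x, hx⟩ ⟨y, hy⟩ from h).reachable⟩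

end ReachableIn

lemma connected_induce_of_forall_reachableIn (hx : x ∈ s)
    (h : ∀ y ∈ s, G.ReachableIn s x y) : (G.induce s).Connected :=
  (connected_iff_exists_forall_reachable _).2
    ⟨⟨x, hx⟩, fun ⟨y, hy⟩ => let ⟨_, _, h⟩ := h y hy; h⟩

lemma reachableIn_of_isChain {l : List V} (hl : l.IsChain G.Adj) (hs : ∀ y ∈ l, y ∈ s)
    (hx : x ∈ l) (hy : y ∈ l) : G.ReachableIn s x y := by
  induction l generalizing x y with
  | nil => simp at hx
  | cons a l ih =>
    have hhead : ∀ z ∈ a :: l, G.ReachableIn s a z := by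
      rintro z (_ | ⟨_, hz⟩)
      · exact .refl (hs a (by simp))
      · obtain ⟨b, l, rfl⟩ := List.exists_cons_of_ne_nil (List.ne_nil_of_mem hz)
        have hab : G.Adj a b := (List.isChain_cons_cons.1 hl).1
        exact (ReachableIn.of_adj (hs a (by simp)) (hs b (by simp)) hab).trans
          (ih hl.tail (fun w hw => hs w (by simp [hw])) List.mem_cons_self hz)
    exact (hhead x hx).symm.trans (hhead y hy)

def induceInduceIso (G : SimpleGraph V) (s : Set V) (K : Set s) :
    (G.induce s).induce Kᶜ ≃g G.induce (s \ Subtype.val '' K) where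
  toFun x := ⟨x.1.1, x.1.2, fun ⟨_, hy, e⟩ => x.2 (Subtype.ext e ▸ hy)⟩
  invFun x := ⟨⟨x.1, x.2.1⟩, fun h => x.2.2 ⟨_, h, rfl⟩⟩
  left_inv _ := rfl
  right_inv _ := rfl
  map_rel_iff' := Iff.rfl

end SimpleGraph

lemma ChainAdj.mem {α : Type} {l : List α} {x y : α} (h : ChainAdj l x y) : x ∈ l ∧ y ∈ l := by
  obtain ⟨i, ⟨h1, h2⟩ | ⟨h1, h2⟩⟩ := h
  · exact ⟨List.mem_of_getElem? h1, List.mem_of_getElem? h2⟩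
  · exact ⟨List.mem_of_getElem? h2, List.mem_of_getElem? h1⟩

lemma ChainAdj.index_adjacent {α : Type} {l : List α} (hl : l.Nodup) {i j : ℕ}
    {hi : i < l.length} {hj : j < l.length} (h : ChainAdj l l[i] l[j]) : i + 1 = j ∨ j + 1 = i := by
  have key : ∀ {k m} {hm : m < l.length}, l[k]? = some l[m] → k = m := fun h => by
    obtain ⟨hk, e⟩ := List.getElem?_eq_some_iff.1 h
    exact (hl.getElem_inj_iff).1 e
  obtain ⟨k, ⟨h1, h2⟩ | ⟨h1, h2⟩⟩ := h
  · have := key h1; have := key h2; omega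
  · have := key h1; have := key h2; omega

lemma List.Nodup.take_or_drop_disjoint_of_chainAdj {α : Type} {l : List α} (hl : l.Nodup)
    {K : Set α} (hK : ∀ y ∈ l, ∀ z ∈ l, y ∈ K → z ∈ K → y ≠ z → ChainAdj l y z)
    {i : ℕ} (hi : i < l.length) (hx : l[i] ∉ K) :
    (∀ y ∈ l.take (i + 1), y ∉ K) ∨ (∀ y ∈ l.drop i, y ∉ K) := by
  by_contra! h
  obtain ⟨⟨y, hy, hyK⟩, ⟨z, hz, hzK⟩⟩ := h
  obtain ⟨k, hk, rfl⟩ := List.mem_iff_getElem.1 hy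
  obtain ⟨m, hm, rfl⟩ := List.mem_iff_getElem.1 hz
  simp only [List.getElem_take, List.getElem_drop] at hyK hzK
  rw [List.length_take] at hk
  rw [List.length_drop] at hm
  have hki : k ≠ i := fun e => hx (e ▸ hyK)
  have hm0 : m ≠ 0 := fun e => hx (by simpa [e] using hzK)
  have hne : l[k] ≠ l[i + m] := by
    rw [Ne, hl.getElem_inj_iff]; omega
  have := ChainAdj.index_adjacent hl
    (hK _ (List.getElem_mem _) _ (List.getElem_mem _) hyK hzK hne)
  omega

lemma Tl_succ (k : ℕ) :
    Tl (k + 1) = [[1]] ++ (Tl k).map (1 :: ·) ++ [[2], [3]] ++ (Tl k).map (3 :: ·) ++ [[4]] :=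
  rfl

lemma length_mem_Icc_of_mem_Tl {d : ℕ} {a : List ℕ} (ha : a ∈ Tl d) :
    1 ≤ a.length ∧ a.length ≤ d := by
  induction d generalizing a with
  | zero => simp [Tl] at ha
  | succ k ih =>
    simp only [Tl_succ, List.mem_append, List.mem_map, List.mem_cons,
      List.not_mem_nil, or_false] at ha
    rcases ha with (((rfl | ⟨b, hb, rfl⟩) | rfl | rfl) | ⟨b, hb, rfl⟩) | rfl
    all_goals simp only [List.length_cons, List.length_nil]
    all_goals first | omega | (have := ih hb; omega)

lemma ne_nil_of_mem_Tl {d : ℕ} {a : List ℕ} (ha : a ∈ Tl d) : a ≠ [] :=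
  List.ne_nil_of_length_pos (length_mem_Icc_of_mem_Tl ha).1

lemma replicate_one_mem_Tl {d m : ℕ} (h1 : 1 ≤ m) (h2 : m ≤ d) : List.replicate m 1 ∈ Tl d := by
  induction d generalizing m with
  | zero => omega
  | succ k ih =>
    obtain rfl | ⟨m, rfl⟩ : m = 1 ∨ ∃ m', m = m' + 2 := by
      rcases m with _ | _ | m <;> simp_all
    · simp [Tl_succ]
    · have := ih (m := m + 1) (by omega) (by omega)
      simpa [Tl_succ, List.replicate_succ] using this

lemma Tl_nodup (d : ℕ) : (Tl d).Nodup := by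
  induction d with
  | zero => simp [Tl]
  | succ k ih =>
    have hcons : ∀ n, ((Tl k).map (n :: ·)).Nodup := fun n => ih.map (List.cons_injective)
    have hnil : [] ∉ Tl k := fun h => ne_nil_of_mem_Tl h rfl
    simp [Tl_succ, List.nodup_append, hcons, hnil, or_imp, forall_and]

lemma Tl_add_two (k : ℕ) : ∃ t, Tl (k + 2) = [1] :: [1, 1] :: t := ⟨_, rfl⟩

lemma Tl_add_two_eq_append (k : ℕ) : ∃ s, Tl (k + 2) = s ++ [[3, 4], [4]] := by
  obtain ⟨s, hs⟩ : ∃ s, Tl (k + 1) = s ++ [[4]] := ⟨_, rfl⟩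
  refine ⟨[[1]] ++ (Tl (k + 1)).map (1 :: ·) ++ [[2], [3]] ++ s.map (3 :: ·), ?_⟩
  rw [Tl_succ (k + 1), hs]
  simp

lemma one_mem_Tl {d : ℕ} (hd : 1 ≤ d) : [1] ∈ Tl d := replicate_one_mem_Tl le_rfl hd

def pathBlock (d : ℕ) (p : ℕ × List ℕ) : List Vtx :=
  Vtx.elt p.2 :: (match (Tl d)[p.1 + 1]? with
    | none => []
    | some b =>
      if p.2.length = b.length then [Vtx.sub p.1 0, Vtx.sub p.1 1]
      else [Vtx.sub p.1 0])

lemma pathList_eq_flatMap (d : ℕ) :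
    pathList d = ((Tl d).zipIdx.map Prod.swap).flatMap (pathBlock d) := rfl

lemma mem_pathBlock {d : ℕ} {p : ℕ × List ℕ} {x : Vtx} (hx : x ∈ pathBlock d p) :
    x = Vtx.elt p.2 ∨ ∃ s, x = Vtx.sub p.1 s := by
  unfold pathBlock at hx
  split at hx
  · simp_all
  · split at hx <;> aesop

lemma mem_pathList {d : ℕ} {x : Vtx} (hx : x ∈ pathList d) :
    (∃ a ∈ Tl d, x = Vtx.elt a) ∨ ∃ j s, x = Vtx.sub j s := by
  rw [pathList_eq_flatMap, List.mem_flatMap] at hx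
  obtain ⟨⟨i, a⟩, hp, hx⟩ := hx
  rcases mem_pathBlock hx with rfl | ⟨s, rfl⟩
  · obtain ⟨⟨b, j⟩, hq, hqa⟩ := List.mem_map.1 hp
    obtain ⟨rfl, rfl⟩ := Prod.mk.inj hqa
    exact Or.inl ⟨b, List.fst_mem_of_mem_zipIdx hq, rfl⟩
  · exact Or.inr ⟨i, s, rfl⟩

lemma elt_mem_pathList {d : ℕ} {a : List ℕ} (ha : a ∈ Tl d) : Vtx.elt a ∈ pathList d := by
  rw [← List.zipIdx_map_fst 0 (Tl d), List.mem_map] at ha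
  obtain ⟨⟨a, i⟩, hq, rfl⟩ := ha
  rw [pathList_eq_flatMap, List.mem_flatMap]
  exact ⟨(i, a), List.mem_map_of_mem hq, List.mem_cons_self⟩

lemma elt_mem_pathList_iff {d : ℕ} {a : List ℕ} : Vtx.elt a ∈ pathList d ↔ a ∈ Tl d :=
  ⟨fun h => by rcases mem_pathList h with ⟨b, hb, ⟨⟩⟩ | ⟨_, _, ⟨⟩⟩; exact hb, elt_mem_pathList⟩

lemma ctr_not_mem_pathList {d k : ℕ} : Vtx.ctr k ∉ pathList d := by
  intro h
  rcases mem_pathList h with ⟨_, _, h⟩ | ⟨_, _, h⟩ <;> cases h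

lemma pathList_nodup (d : ℕ) : (pathList d).Nodup := by
  rw [pathList_eq_flatMap, List.nodup_flatMap]
  refine ⟨fun p _ => ?_, ?_⟩
  · unfold pathBlock; split
    · simp
    · split <;> simp
  · have helt : ((Tl d).zipIdx.map Prod.swap).Pairwise (fun p q => p.2 ≠ q.2) := by
      have := Tl_nodup d
      rw [← List.zipIdx_map_fst 0 (Tl d)] at this
      exact List.pairwise_map.2 (List.pairwise_map.1 this)
    have hidx : ((Tl d).zipIdx.map Prod.swap).Pairwise (fun p q => p.1 ≠ q.1) := by
      have := List.nodup_range' (s := 0) (n := (Tl d).length)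
      rw [← List.zipIdx_map_snd 0 (Tl d)] at this
      exact List.pairwise_map.2 (List.pairwise_map.1 this)
    refine (helt.and hidx).imp ?_
    rintro p q ⟨helt, hidx⟩ x hxp hxq
    rcases mem_pathBlock hxp with rfl | ⟨s, rfl⟩ <;>
      rcases mem_pathBlock hxq with h | ⟨t, h⟩ <;> simp_all

lemma pathList_add_two (k : ℕ) :
    ∃ r, pathList (k + 2) = Vtx.elt [1] :: Vtx.sub 0 0 :: Vtx.elt [1, 1] :: r := by
  obtain ⟨t, ht⟩ := Tl_add_two k
  simp [pathList_eq_flatMap, ht, List.zipIdx_cons, pathBlock]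

lemma pathList_add_two_eq_append (k : ℕ) :
    ∃ r m, pathList (k + 2) = r ++ [Vtx.elt [3, 4], Vtx.sub m 0, Vtx.elt [4]] := by
  obtain ⟨s, hs⟩ := Tl_add_two_eq_append k
  rw [pathList_eq_flatMap, hs]
  refine ⟨(s.zipIdx.map Prod.swap).flatMap (pathBlock (k + 2)), s.length, ?_⟩
  simp [List.zipIdx_append, pathBlock, hs]

lemma mem_VSet {d : ℕ} {x : Vtx} :
    x ∈ VSet d ↔ x ∈ pathList d ∨ ∃ m, 1 ≤ m ∧ m ≤ d ∧ x = Vtx.ctr m := by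
  simp [VSet, eq_comm, and_assoc]

lemma mem_VSet_of_mem_pathList {d : ℕ} {x : Vtx} (hx : x ∈ pathList d) : x ∈ VSet d :=
  mem_VSet.2 (Or.inl hx)

lemma ctr_mem_VSet {d m : ℕ} : Vtx.ctr m ∈ VSet d ↔ 1 ≤ m ∧ m ≤ d := by
  simp [mem_VSet, ctr_not_mem_pathList]

/-- `Gd d` is `(gdGraph d).induce (VSet d)` by definition. -/
def gdGraph (d : ℕ) : SimpleGraph Vtx where
  Adj := GdAdj d
  symm := ⟨fun _ _ ⟨hne, h⟩ => ⟨hne.symm, h.imp (fun ⟨i, hi⟩ => ⟨i, hi.symm⟩) Or.symm⟩⟩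
  loopless := ⟨fun _ h => h.1 rfl⟩

section gdGraph

variable {d : ℕ}

lemma gdGraph_adj {x y : Vtx} : (gdGraph d).Adj x y ↔ GdAdj d x y := Iff.rfl

lemma gdGraph_adj_ctr_ctr {k m : ℕ} (hkm : k ≠ m) (hk : 1 ≤ k ∧ k ≤ d) (hm : 1 ≤ m ∧ m ≤ d) :
    (gdGraph d).Adj (Vtx.ctr k) (Vtx.ctr m) :=
  gdGraph_adj.2 ⟨by simpa using hkm, Or.inr (Or.inl ⟨hkm, hk.1, hk.2, hm.1, hm.2⟩)⟩

lemma gdGraph_adj_ctr_elt {a : List ℕ} (ha : a ∈ Tl d) :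
    (gdGraph d).Adj (Vtx.ctr a.length) (Vtx.elt a) :=
  have ⟨h1, h2⟩ := length_mem_Icc_of_mem_Tl ha
  gdGraph_adj.2 ⟨by simp, Or.inr (Or.inl ⟨h1, h2, ha, rfl⟩)⟩

lemma exists_eq_ctr_of_ctrAdj {x y : Vtx} (h : ctrAdj d x y) : ∃ k, x = Vtx.ctr k := by
  cases x <;> cases y <;> simp_all [ctrAdj]

lemma eq_elt_of_gdGraph_adj_ctr {m : ℕ} {x : Vtx} (h : (gdGraph d).Adj (Vtx.ctr m) x)
    (hx : x ∈ pathList d) : ∃ a, x = Vtx.elt a ∧ a.length = m := by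
  obtain ⟨-, hc | hc | hc⟩ := gdGraph_adj.1 h
  · exact absurd (ChainAdj.mem hc).1 ctr_not_mem_pathList
  · cases x with
    | elt a => exact ⟨a, rfl, hc.2.2.2⟩
    | sub => exact hc.elim
    | ctr => exact absurd hx ctr_not_mem_pathList
  · obtain ⟨k, rfl⟩ := exists_eq_ctr_of_ctrAdj hc
    exact absurd hx ctr_not_mem_pathList

lemma chainAdj_of_gdGraph_adj {x y : Vtx} (h : (gdGraph d).Adj x y) (hx : x ∈ pathList d)
    (hy : y ∈ pathList d) : ChainAdj (pathList d) x y := by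
  obtain ⟨-, hc | hc | hc⟩ := gdGraph_adj.1 h
  · exact hc
  · obtain ⟨k, rfl⟩ := exists_eq_ctr_of_ctrAdj hc
    exact absurd hx ctr_not_mem_pathList
  · obtain ⟨k, rfl⟩ := exists_eq_ctr_of_ctrAdj hc
    exact absurd hy ctr_not_mem_pathList

lemma isChain_pathList : (pathList d).IsChain (gdGraph d).Adj :=
  List.isChain_iff_getElem.2 fun i hi => gdGraph_adj.2
    ⟨by rw [Ne, (pathList_nodup d).getElem_inj_iff]; omega,
      Or.inl ⟨i, Or.inl ⟨List.getElem?_eq_getElem _, List.getElem?_eq_getElem _⟩⟩⟩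

end gdGraph

section Clique

variable {d : ℕ} {K : Set Vtx}

lemma SimpleGraph.IsClique.eq_elt_of_ctr_mem (hK : (gdGraph d).IsClique K) {m : ℕ}
    (hm : Vtx.ctr m ∈ K) {x : Vtx} (hx : x ∈ pathList d) (hxK : x ∈ K) :
    ∃ a, x = Vtx.elt a ∧ a.length = m :=
  eq_elt_of_gdGraph_adj_ctr
    (hK hm hxK fun e => ctr_not_mem_pathList (e ▸ hx)) hx

lemma SimpleGraph.IsClique.ctr_eq_of_mem_pathList (hK : (gdGraph d).IsClique K) {p : Vtx}
    (hp : p ∈ pathList d) (hpK : p ∈ K) {m m' : ℕ} (hm : Vtx.ctr m ∈ K)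
    (hm' : Vtx.ctr m' ∈ K) : m = m' := by
  obtain ⟨a, rfl, rfl⟩ := hK.eq_elt_of_ctr_mem hm hp hpK
  obtain ⟨b, hb, rfl⟩ := hK.eq_elt_of_ctr_mem hm' hp hpK
  cases hb
  rfl

lemma SimpleGraph.IsClique.chainAdj_pathList (hK : (gdGraph d).IsClique K) :
    ∀ y ∈ pathList d, ∀ z ∈ pathList d, y ∈ K → z ∈ K → y ≠ z → ChainAdj (pathList d) y z :=
  fun _ hy _ hz hyK hzK hne => chainAdj_of_gdGraph_adj (hK hyK hzK hne) hy hz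

/-- Inside a `K`-free prefix `u` of the path read from the end `elt a, sub j 0, elt b, …`,
`x` reaches `elt a`. If `ctr a.length ∈ K`, then `K` meets the path only in elements of length
`a.length`, so `x` also reaches `elt b`, whose center survives. -/
lemma exists_reachableIn_elt_of_prefix (hK : (gdGraph d).IsClique K)
    (hctr : ∀ m m', Vtx.ctr m ∈ K → Vtx.ctr m' ∈ K → m = m') {l r : List Vtx}
    {a b : List ℕ} {j : ℕ} (hl₀ : l = Vtx.elt a :: Vtx.sub j 0 :: Vtx.elt b :: r)
    (hl : l.IsChain (gdGraph d).Adj) (hlp : ∀ y ∈ l, y ∈ pathList d)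
    (hab : a.length ≠ b.length) {u : List Vtx} (hu : u <+: l) (huK : ∀ y ∈ u, y ∉ K)
    {x : Vtx} (hx : x ∈ u) :
    ∃ c ∈ Tl d, Vtx.ctr c.length ∉ K ∧
      (gdGraph d).ReachableIn (↑(VSet d) \ K) x (Vtx.elt c) := by
  subst hl₀
  have hs : ∀ y ∈ Vtx.elt a :: Vtx.sub j 0 :: Vtx.elt b :: r, y ∉ K → y ∈ ↑(VSet d) \ K :=
    fun y hy hyK => ⟨mem_VSet_of_mem_pathList (hlp y hy), hyK⟩
  have ha : a ∈ Tl d := elt_mem_pathList_iff.1 (hlp _ (by simp))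
  have hb : b ∈ Tl d := elt_mem_pathList_iff.1 (hlp _ (by simp))
  have hau : Vtx.elt a ∈ u := by
    obtain ⟨y, u, rfl⟩ := List.exists_cons_of_ne_nil (List.ne_nil_of_mem hx)
    rw [(List.cons_prefix_cons.1 hu).1]
    exact List.mem_cons_self
  have hxa : (gdGraph d).ReachableIn (↑(VSet d) \ K) x (Vtx.elt a) :=
    reachableIn_of_isChain (hl.infix hu.isInfix)
      (fun y hy => hs y (hu.subset hy) (huK y hy)) hx hau
  by_cases haK : Vtx.ctr a.length ∈ K
  · have hlen : ∀ y ∈ Vtx.elt a :: Vtx.sub j 0 :: Vtx.elt b :: r, y ∈ K →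
        ∃ c, y = Vtx.elt c ∧ c.length = a.length :=
      fun y hy hyK => hK.eq_elt_of_ctr_mem haK (hlp y hy) hyK
    have hab' : (gdGraph d).ReachableIn (↑(VSet d) \ K) (Vtx.elt a) (Vtx.elt b) := by
      refine reachableIn_of_isChain (l := [Vtx.elt a, Vtx.sub j 0, Vtx.elt b])
        (hl.infix ⟨[], r, rfl⟩) (fun y hy => ?_) (by simp) (by simp)
      simp only [List.mem_cons, List.not_mem_nil, or_false] at hy
      rcases hy with rfl | rfl | rfl
      · exact hs _ (by simp) (huK _ hau)
      · exact hs _ (by simp) fun h => by obtain ⟨c, ⟨⟩, -⟩ := hlen _ (by simp) h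
      · exact hs _ (by simp) fun h => by
          obtain ⟨c, ⟨⟩, hc⟩ := hlen _ (by simp) h
          exact hab hc.symm
    exact ⟨b, hb, fun hbK => hab (hctr _ _ haK hbK), hxa.trans hab'⟩
  · exact ⟨a, ha, haK, hxa⟩

end Clique

lemma connected_induce_of_pathList_subset {d : ℕ} (hd : 1 ≤ d) {s : Set Vtx}
    (hsV : s ⊆ VSet d) (hLs : ∀ x ∈ pathList d, x ∈ s) : ((gdGraph d).induce s).Connected := by
  have h1 : Vtx.elt [1] ∈ pathList d := elt_mem_pathList (one_mem_Tl hd)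
  refine connected_induce_of_forall_reachableIn (hLs _ h1) fun y hy => ?_
  rcases mem_VSet.1 (hsV hy) with hyL | ⟨m, hm1, hmd, rfl⟩
  · exact reachableIn_of_isChain isChain_pathList hLs h1 hyL
  · have ha := replicate_one_mem_Tl hm1 hmd
    have haL := elt_mem_pathList ha
    refine (reachableIn_of_isChain isChain_pathList hLs h1 haL).trans
      (ReachableIn.of_adj (hLs _ haL) hy ?_)
    simpa using (gdGraph_adj_ctr_elt ha).symm

lemma exists_reachableIn_elt_of_mem_pathList {d : ℕ} (hd : 2 ≤ d) {K : Set Vtx}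
    (hK : (gdGraph d).IsClique K) (hctr : ∀ m m', Vtx.ctr m ∈ K → Vtx.ctr m' ∈ K → m = m')
    {x : Vtx} (hx : x ∈ pathList d) (hxK : x ∉ K) :
    ∃ c ∈ Tl d, Vtx.ctr c.length ∉ K ∧
      (gdGraph d).ReachableIn (↑(VSet d) \ K) x (Vtx.elt c) := by
  obtain ⟨k, rfl⟩ : ∃ k, d = k + 2 := ⟨d - 2, by omega⟩
  obtain ⟨i, hi, rfl⟩ := List.mem_iff_getElem.1 hx
  obtain ⟨r, hr⟩ := pathList_add_two k
  obtain ⟨r', j, hr'⟩ := pathList_add_two_eq_append k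
  have hchain := isChain_pathList (d := k + 2)
  rcases (pathList_nodup _).take_or_drop_disjoint_of_chainAdj hK.chainAdj_pathList hi hxK
    with hpre | hsuf
  · exact exists_reachableIn_elt_of_prefix hK hctr hr hchain (fun _ => id) (by simp)
      (List.take_prefix _ _) hpre (List.mem_take_iff_getElem.2 ⟨i, by omega, rfl⟩)
  · have hrev : (pathList (k + 2)).reverse =
        Vtx.elt [4] :: Vtx.sub j 0 :: Vtx.elt [3, 4] :: r'.reverse := by simp [hr']
    exact exists_reachableIn_elt_of_prefix hK hctr hrev
      (List.isChain_reverse.2 (hchain.imp fun _ _ h => h.symm)) (by simp) (by simp)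
      (List.drop_suffix _ _).reverse (by simpa using hsuf)
      (List.mem_reverse.2 (List.mem_drop_iff_getElem.2 ⟨0, by omega, rfl⟩))

lemma connected_induce_diff_of_isClique {d : ℕ} (hd : 2 ≤ d) {K : Set Vtx}
    (hK : (gdGraph d).IsClique K) {p : Vtx} (hp : p ∈ pathList d) (hpK : p ∈ K) :
    ((gdGraph d).induce (↑(VSet d) \ K)).Connected := by
  set s : Set Vtx := ↑(VSet d) \ K
  have hctr : ∀ m m', Vtx.ctr m ∈ K → Vtx.ctr m' ∈ K → m = m' :=
    fun _ _ => hK.ctr_eq_of_mem_pathList hp hpK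
  obtain ⟨m₀, hm₀⟩ : ∃ m₀, Vtx.ctr m₀ ∈ s := by
    by_cases h1 : Vtx.ctr 1 ∈ K
    · exact ⟨2, ctr_mem_VSet.2 (by omega), fun h2 => absurd (hctr _ _ h1 h2) (by decide)⟩
    · exact ⟨1, ctr_mem_VSet.2 (by omega), h1⟩
  have hcenter : ∀ m, Vtx.ctr m ∈ s → (gdGraph d).ReachableIn s (Vtx.ctr m₀) (Vtx.ctr m) := by
    intro m hm
    by_cases e : m₀ = m
    · exact e ▸ .refl hm₀
    · exact .of_adj hm₀ hm (gdGraph_adj_ctr_ctr e (ctr_mem_VSet.1 hm₀.1) (ctr_mem_VSet.1 hm.1))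
  refine connected_induce_of_forall_reachableIn hm₀ fun y hy => ?_
  rcases mem_VSet.1 hy.1 with hyL | ⟨m, -, -, rfl⟩
  · obtain ⟨c, hc, hcK, hyc⟩ := exists_reachableIn_elt_of_mem_pathList hd hK hctr hyL hy.2
    have hcs : Vtx.ctr c.length ∈ s := ⟨ctr_mem_VSet.2 (length_mem_Icc_of_mem_Tl hc), hcK⟩
    exact (hcenter _ hcs).trans
      ((ReachableIn.of_adj hcs hyc.2.1 (gdGraph_adj_ctr_elt hc)).trans hyc.symm)
  · exact hcenter m hy

/-- For `d ≥ 2` the graph `G_d` has no clique cutset. -/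
theorem stmt10 (d : ℕ) (hd : 2 ≤ d) (K : Set {x // x ∈ VSet d})
    (hK : (Gd d).IsClique K) : ((Gd d).induce Kᶜ).Connected := by
  have hK' : (gdGraph d).IsClique (Subtype.val '' K) := by
    rintro _ ⟨x, hx, rfl⟩ _ ⟨y, hy, rfl⟩ hne
    exact hK hx hy fun e => hne (congrArg Subtype.val e)
  refine (induceInduceIso (gdGraph d) _ K).connected_iff.2 ?_
  by_cases hp : ∃ p ∈ pathList d, p ∈ Subtype.val '' K
  · obtain ⟨p, hp, hpK⟩ := hp
    exact connected_induce_diff_of_isClique hd hK' hp hpK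
  · exact connected_induce_of_pathList_subset (by omega) Set.sdiff_subset
      fun x hx => ⟨mem_VSet_of_mem_pathList hx, fun hxK => hp ⟨x, hx, hxK⟩⟩
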